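/- arXiv:2105.04005 — 2 statements merged into one kernel-verified Lean document; each statement's English description precedes it below -/
import Mathlib

section
/- Let Q, g ∈ ℝ with Q ≥ 0 and γ > 0, and set Q' = max{-γg, Q + γg}. Then (1/2)(Q')² - (1/2)Q² ≤ γQg + (γg)². -/
/-! Writing `a = γg`, the new queue length is one of `-a` and `Q + a`, so its square is at most
`a² + (Q + a)² = Q² + 2Qa + 2a²`; halving gives the drift bound. -/

theorem max_sq_le_sq_add_sq {α : Type*} [Ring α] [LinearOrder α] [IsStrictOrderedRing α]
    (x y : α) : max x y ^ 2 ≤ x ^ 2 + y ^ 2 := by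
  rcases max_cases x y with ⟨h, _⟩ | ⟨h, _⟩ <;> rw [h]
  · exact le_add_of_nonneg_right (sq_nonneg y)
  · exact le_add_of_nonneg_left (sq_nonneg x)

theorem half_sq_queue_update_sub_le (Q a : ℝ) :
    (1 / 2) * (max (-a) (Q + a)) ^ 2 - (1 / 2) * Q ^ 2 ≤ Q * a + a ^ 2 := by
  linarith [max_sq_le_sq_add_sq (-a) (Q + a)]

theorem stmt_1_general (Q g γ : ℝ) :
    (1 / 2) * (max (-(γ * g)) (Q + γ * g)) ^ 2 - (1 / 2) * Q ^ 2
      ≤ γ * Q * g + (γ * g) ^ 2 := by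
  calc (1 / 2) * (max (-(γ * g)) (Q + γ * g)) ^ 2 - (1 / 2) * Q ^ 2
      ≤ Q * (γ * g) + (γ * g) ^ 2 := half_sq_queue_update_sub_le Q (γ * g)
    _ = γ * Q * g + (γ * g) ^ 2 := by ring

/-- Per-coordinate Lyapunov drift bound for the DTC-OCO virtual queue update:
with `Q ≥ 0`, `γ > 0` and `Q' = max{-γg, Q + γg}`,
`(1/2)(Q')² - (1/2)Q² ≤ γQg + (γg)²`. -/
theorem stmt_1 (Q g γ : ℝ) (hQ : 0 ≤ Q) (hγ : 0 < γ) :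
    (1 / 2) * (max (-(γ * g)) (Q + γ * g)) ^ 2 - (1 / 2) * Q ^ 2
      ≤ γ * Q * g + (γ * g) ^ 2 :=
  stmt_1_general Q g γ
end

section
/- Let Q ∈ ℝ^C with Q ⪰ 0 componentwise, g ∈ ℝ^C, γ > 0, and define Q'_c = max{-γ g_c, Q_c + γ g_c} for each c. Then (1/2)‖Q'‖₂² - (1/2)‖Q‖₂² ≤ γ ⟨Q, g⟩ + ‖γ g‖₂². -/
/-!
Coordinatewise, `max a b ^ 2 ≤ a ^ 2 + b ^ 2`; for `a = -γ g_c`, `b = Q_c + γ g_c` the right-hand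
side minus `Q_c ^ 2` is exactly `2 (γ Q_c g_c + (γ g_c) ^ 2)`, and summing over `c` gives the bound.
-/

open RealInnerProductSpace

theorem sq_max_le_sq_add_sq (a b : ℝ) : max a b ^ 2 ≤ a ^ 2 + b ^ 2 := by
  rcases max_cases a b with ⟨h, _⟩ | ⟨h, _⟩ <;> rw [h] <;> nlinarith [sq_nonneg a, sq_nonneg b]

theorem half_sq_max_neg_sub_half_sq_le (q x : ℝ) :
    1 / 2 * max (-x) (q + x) ^ 2 - 1 / 2 * q ^ 2 ≤ q * x + x ^ 2 := by
  nlinarith [sq_max_le_sq_add_sq (-x) (q + x)]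

theorem EuclideanSpace.norm_sq_eq_sum_sq {ι : Type*} [Fintype ι] (x : EuclideanSpace ℝ ι) :
    ‖x‖ ^ 2 = ∑ i, x i ^ 2 := by
  simp [EuclideanSpace.norm_sq_eq]

theorem stmt_2_general {C : ℕ} (Q g Q' : EuclideanSpace ℝ (Fin C)) (γ : ℝ)
    (hQ' : ∀ c, Q' c = max (-(γ * g c)) (Q c + γ * g c)) :
    (1 / 2) * ‖Q'‖ ^ 2 - (1 / 2) * ‖Q‖ ^ 2 ≤ γ * ⟪Q, g⟫ + ‖γ • g‖ ^ 2 := by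
  have hinner : γ * ⟪Q, g⟫ = ∑ c, Q c * (γ * g c) := by
    simp only [PiLp.inner_apply, Finset.mul_sum]
    exact Finset.sum_congr rfl fun c _ => by simp; ring
  simp only [EuclideanSpace.norm_sq_eq_sum_sq, hinner, Finset.mul_sum, ← Finset.sum_sub_distrib,
    ← Finset.sum_add_distrib, PiLp.smul_apply, smul_eq_mul, hQ']
  exact Finset.sum_le_sum fun c _ => half_sq_max_neg_sub_half_sq_le (Q c) (γ * g c)

/-- Vector Lyapunov drift bound for the DTC-OCO virtual queue update:
`(1/2)‖Q'‖₂² - (1/2)‖Q‖₂² ≤ γ⟨Q, g⟩ + ‖γg‖₂²`. -/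
theorem stmt_2 {C : ℕ} (Q g Q' : EuclideanSpace ℝ (Fin C)) (γ : ℝ)
    (hγ : 0 < γ) (hQ : ∀ c, 0 ≤ Q c)
    (hQ' : ∀ c, Q' c = max (-(γ * g c)) (Q c + γ * g c)) :
    (1 / 2) * ‖Q'‖ ^ 2 - (1 / 2) * ‖Q‖ ^ 2 ≤ γ * ⟪Q, g⟫ + ‖γ • g‖ ^ 2 :=
  stmt_2_general Q g Q' γ hQ'
end
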